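/- Differentiating in the parameter b: for a > 0, b > 0, s > 1, and continuous compactly supported F on [0,∞), ∫₀^∞ e^(−s t) · (∫₀^∞ F(u) · t^(a u + b) / Γ(a u + b + 1) · (ln t − Γ'(a u + b + 1)/Γ(a u + b + 1)) du) dt = − ln(s) · f(a·ln s) / s^(b+1), where f(w) = ∫₀^∞ e^(−w u) F(u) du. -/

import Mathlib

open MeasureTheory Real Set Filter Topology

/-!
The inner kernel `t ^ c / Γ (c + 1) * (log t - Γ' (c + 1) / Γ (c + 1))` is the derivative
`∂/∂c (t ^ c / Γ (c + 1))`. Since `∫₀^∞ e^(-s t) t ^ c / Γ (c + 1) dt = s ^ (-(c + 1))`,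
differentiating in `c` under the integral sign gives `∫₀^∞ e^(-s t) · kernel dt =
-log s · s ^ (-(c + 1))`. On a compact range of `c ∈ (0, ∞)` the functions `1 / Γ (c + 1)` and
`Γ' (c + 1) / Γ (c + 1)` are bounded, so the kernel is dominated by
`(t ^ c₀ + t ^ c₁) (t + t⁻¹ + 1)`; this justifies the differentiation and, with
`c = a u + b` and `F` compactly supported, Fubini in `(t, u)`. Finally
`s ^ (-(a u + b + 1)) = e^(-(a log s) u) / s ^ (b + 1)` turns the `u`-integral into `f (a log s)`.
-/

noncomputable def rpowDivGammaDeriv (c t : ℝ) : ℝ :=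
  t ^ c / Gamma (c + 1) * (log t - deriv Gamma (c + 1) / Gamma (c + 1))

lemma Gamma_add_one_pos {c : ℝ} (hc : -1 < c) : 0 < Gamma (c + 1) :=
  Gamma_pos_of_pos (by linarith)

-- The complex `Γ` is holomorphic on `0 < re z`, so its derivative is continuous there.
lemma continuousOn_deriv_Gamma : ContinuousOn (deriv Gamma) (Ioi 0) := by
  have hdiff : DifferentiableOn ℂ Complex.Gamma {z : ℂ | 0 < z.re} := fun z hz =>
    (Complex.differentiableAt_Gamma z fun m h => by
      simp [h] at hz; linarith [(m.cast_nonneg : (0:ℝ) ≤ m)]).differentiableWithinAt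
  have hcont : ContinuousOn (deriv Complex.Gamma) {z : ℂ | 0 < z.re} :=
    (hdiff.analyticOnNhd (isOpen_lt continuous_const Complex.continuous_re)).deriv.continuousOn
  refine (Complex.continuous_re.comp_continuousOn (hcont.comp Complex.continuous_ofReal.continuousOn
    fun x hx => by simpa using hx)).congr fun x hx => ?_
  have := (hdiff.differentiableAt ((isOpen_lt continuous_const Complex.continuous_re).mem_nhds
    (by simpa using hx))).hasDerivAt.real_of_complex
  simp only [Complex.Gamma_ofReal, Complex.ofReal_re] at this
  exact this.deriv

lemma hasDerivAt_rpow_div_Gamma_add_one {t x : ℝ} (ht : 0 < t) (hx : -1 < x) :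
    HasDerivAt (fun c => t ^ c / Gamma (c + 1)) (rpowDivGammaDeriv x t) x := by
  have hΓ0 := (Gamma_add_one_pos hx).ne'
  have hΓ : HasDerivAt (fun c => Gamma (c + 1)) (deriv Gamma (x + 1)) x :=
    (differentiableOn_Gamma_Ioi.differentiableAt
      (Ioi_mem_nhds (by linarith))).hasDerivAt.comp_add_const x 1
  refine ((hasStrictDerivAt_const_rpow ht x).hasDerivAt.div hΓ hΓ0).congr_deriv ?_
  rw [rpowDivGammaDeriv]
  field_simp

lemma continuousOn_rpowDivGammaDeriv :
    ContinuousOn (fun p : ℝ × ℝ => rpowDivGammaDeriv p.1 p.2) (Ioi (-1) ×ˢ Ioi 0) := by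
  have hΓ : ContinuousOn (fun p : ℝ × ℝ => Gamma (p.1 + 1)) (Ioi (-1) ×ˢ Ioi 0) :=
    differentiableOn_Gamma_Ioi.continuousOn.comp (by fun_prop) fun p hp => by
      simp only [mem_Ioi]; linarith [hp.1.out]
  have hΓ' : ContinuousOn (fun p : ℝ × ℝ => deriv Gamma (p.1 + 1)) (Ioi (-1) ×ˢ Ioi 0) :=
    continuousOn_deriv_Gamma.comp (by fun_prop) fun p hp => by
      simp only [mem_Ioi]; linarith [hp.1.out]
  have hΓ0 : ∀ p ∈ Ioi (-1 : ℝ) ×ˢ Ioi (0 : ℝ), Gamma (p.1 + 1) ≠ 0 := fun p hp =>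
    (Gamma_add_one_pos hp.1).ne'
  have hpow : ContinuousOn (fun p : ℝ × ℝ => p.2 ^ p.1) (Ioi (-1) ×ˢ Ioi 0) := fun p hp =>
    ((continuousAt_rpow (p.2, p.1) (Or.inl (ne_of_gt hp.2))).comp
      (f := fun p : ℝ × ℝ => (p.2, p.1)) (by fun_prop)).continuousWithinAt
  have hlog : ContinuousOn (fun p : ℝ × ℝ => log p.2) (Ioi (-1) ×ˢ Ioi 0) := fun p hp =>
    ((continuousAt_log (ne_of_gt hp.2)).comp continuous_snd.continuousAt).continuousWithinAt
  exact (hpow.div hΓ hΓ0).mul (hlog.sub (hΓ'.div hΓ hΓ0))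

lemma abs_log_le_add_inv {t : ℝ} (ht : 0 < t) : |log t| ≤ t + t⁻¹ := by
  rcases le_or_gt 1 t with h | h
  · rw [abs_of_nonneg (log_nonneg h)]
    linarith [log_le_sub_one_of_pos ht, inv_pos.2 ht]
  · rw [abs_of_nonpos (log_nonpos ht.le h.le), ← log_inv]
    linarith [log_le_sub_one_of_pos (inv_pos.2 ht)]

lemma rpow_le_rpow_add_rpow {t p q x : ℝ} (ht : 0 < t) (hp : p ≤ x) (hq : x ≤ q) :
    t ^ x ≤ t ^ p + t ^ q := by
  rcases le_or_gt t 1 with h | h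
  · linarith [rpow_le_rpow_of_exponent_ge ht h hp, rpow_nonneg ht.le q]
  · linarith [rpow_le_rpow_of_exponent_le h.le hq, rpow_nonneg ht.le p]

lemma integrableOn_rpow_mul_exp_neg_mul {p r : ℝ} (hp : -1 < p) (hr : 0 < r) :
    IntegrableOn (fun t => t ^ p * exp (-(r * t))) (Ioi 0) := by
  simpa using integrableOn_rpow_mul_exp_neg_mul_rpow hp zero_lt_one hr

lemma integrableOn_rpow_mul_add_inv_add_one_mul_exp_neg_mul {p r : ℝ} (hp : 0 < p) (hr : 0 < r) :
    IntegrableOn (fun t => t ^ p * (t + t⁻¹ + 1) * exp (-(r * t))) (Ioi 0) := by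
  have hsum := ((integrableOn_rpow_mul_exp_neg_mul (p := p + 1) (by linarith) hr).add
    (integrableOn_rpow_mul_exp_neg_mul (p := p - 1) (by linarith) hr)).add
    (integrableOn_rpow_mul_exp_neg_mul (p := p) (by linarith) hr)
  refine hsum.congr_fun (fun t (ht : 0 < t) => ?_) measurableSet_Ioi
  simp only [Pi.add_apply, rpow_add_one ht.ne', rpow_sub_one ht.ne']
  field_simp

lemma abs_log_sub_le {t K M : ℝ} (ht : 0 < t) (hK : |K| ≤ M) :
    |log t - K| ≤ (1 + M) * (t + t⁻¹ + 1) := by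
  have : 0 ≤ M * (t + t⁻¹) := mul_nonneg ((abs_nonneg K).trans hK) (by positivity)
  calc |log t - K| ≤ |log t| + |K| := abs_sub _ _
    _ ≤ t + t⁻¹ + M := add_le_add (abs_log_le_add_inv ht) hK
    _ ≤ (1 + M) * (t + t⁻¹ + 1) := by nlinarith

lemma exists_bound_rpowDivGammaDeriv (c₀ c₁ : ℝ) (h₀ : -1 < c₀) :
    ∃ M, ∀ c ∈ Icc c₀ c₁, ∀ t, 0 < t →
      |rpowDivGammaDeriv c t| ≤ M * ((t ^ c₀ + t ^ c₁) * (t + t⁻¹ + 1)) := by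
  have hpos : ∀ c ∈ Icc c₀ c₁, 0 < c + 1 := fun c hc => by linarith [hc.1]
  have hΓ : ContinuousOn (fun c => Gamma (c + 1)) (Icc c₀ c₁) :=
    differentiableOn_Gamma_Ioi.continuousOn.comp (by fun_prop) hpos
  have hΓ0 : ∀ c ∈ Icc c₀ c₁, Gamma (c + 1) ≠ 0 := fun c hc =>
    (Gamma_pos_of_pos (hpos c hc)).ne'
  obtain ⟨M₁, hM₁⟩ := isCompact_Icc.exists_bound_of_continuousOn (hΓ.inv₀ hΓ0)
  obtain ⟨M₂, hM₂⟩ := isCompact_Icc.exists_bound_of_continuousOn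
    ((continuousOn_deriv_Gamma.comp (by fun_prop) hpos).div hΓ hΓ0)
  refine ⟨M₁ * (1 + M₂), fun c hc t ht => ?_⟩
  have hinv : |(Gamma (c + 1))⁻¹| ≤ M₁ := hM₁ c hc
  have hlog := abs_log_sub_le ht (K := deriv Gamma (c + 1) / Gamma (c + 1)) (hM₂ c hc)
  have hM₁0 : 0 ≤ M₁ := (abs_nonneg _).trans hinv
  rw [rpowDivGammaDeriv, div_eq_mul_inv, abs_mul, abs_mul, abs_of_pos (rpow_pos_of_pos ht c)]
  calc t ^ c * |(Gamma (c + 1))⁻¹| * |log t - deriv Gamma (c + 1) / Gamma (c + 1)|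
      ≤ (t ^ c₀ + t ^ c₁) * M₁ * ((1 + M₂) * (t + t⁻¹ + 1)) := by
        gcongr
        exact rpow_le_rpow_add_rpow ht hc.1 hc.2
    _ = M₁ * (1 + M₂) * ((t ^ c₀ + t ^ c₁) * (t + t⁻¹ + 1)) := by ring

lemma exists_integrableOn_bound_exp_neg_mul_mul_rpowDivGammaDeriv {s c₀ c₁ : ℝ}
    (hs : 0 < s) (h₀ : 0 < c₀) (h₀₁ : c₀ ≤ c₁) :
    ∃ B : ℝ → ℝ, IntegrableOn B (Ioi 0) ∧ ∀ c ∈ Icc c₀ c₁, ∀ t ∈ Ioi (0 : ℝ),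
      ‖exp (-(s * t)) * rpowDivGammaDeriv c t‖ ≤ B t := by
  obtain ⟨M, hM⟩ := exists_bound_rpowDivGammaDeriv c₀ c₁ (by linarith)
  refine ⟨fun t => M * (t ^ c₀ * (t + t⁻¹ + 1) * exp (-(s * t))
      + t ^ c₁ * (t + t⁻¹ + 1) * exp (-(s * t))),
    ((integrableOn_rpow_mul_add_inv_add_one_mul_exp_neg_mul h₀ hs).add
      (integrableOn_rpow_mul_add_inv_add_one_mul_exp_neg_mul (h₀.trans_le h₀₁) hs)).const_mul M,
    fun c hc t ht => ?_⟩
  rw [norm_mul, norm_of_nonneg (exp_pos _).le, Real.norm_eq_abs]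
  calc exp (-(s * t)) * |rpowDivGammaDeriv c t|
      ≤ exp (-(s * t)) * (M * ((t ^ c₀ + t ^ c₁) * (t + t⁻¹ + 1))) := by
        gcongr
        exact hM c hc t ht
    _ = _ := by ring

lemma integral_exp_neg_mul_mul_rpow_div_Gamma {s x : ℝ} (hs : 0 < s) (hx : -1 < x) :
    ∫ t in Ioi 0, exp (-(s * t)) * (t ^ x / Gamma (x + 1)) = (1 / s) ^ (x + 1) := by
  have h := integral_rpow_mul_exp_neg_mul_Ioi (a := x + 1) (by linarith) hs
  rw [add_sub_cancel_right] at h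
  simp_rw [mul_div_assoc', mul_comm (exp _), integral_div, h]
  field_simp [(Gamma_add_one_pos hx).ne']

lemma integral_exp_neg_mul_mul_rpowDivGammaDeriv {s c : ℝ} (hs : 0 < s) (hc : 0 < c) :
    ∫ t in Ioi 0, exp (-(s * t)) * rpowDivGammaDeriv c t = -log s / s ^ (c + 1) := by
  obtain ⟨B, hB, hbound⟩ :=
    exists_integrableOn_bound_exp_neg_mul_mul_rpowDivGammaDeriv hs (half_pos hc)
      (by linarith : c / 2 ≤ 3 * c / 2)
  have hnhds : Icc (c / 2) (3 * c / 2) ∈ 𝓝 c := Icc_mem_nhds (by linarith) (by linarith)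
  have hint : Integrable (fun t => exp (-(s * t)) * (t ^ c / Gamma (c + 1)))
      (volume.restrict (Ioi 0)) :=
    ((integrableOn_rpow_mul_exp_neg_mul (by linarith) hs).div_const (Gamma (c + 1))).congr
      (ae_of_all _ fun t => by dsimp only; ring)
  have hdiff : ∀ᵐ t ∂volume.restrict (Ioi 0), ∀ x ∈ Icc (c / 2) (3 * c / 2),
      HasDerivAt (fun y => exp (-(s * t)) * (t ^ y / Gamma (y + 1)))
        (exp (-(s * t)) * rpowDivGammaDeriv x t) x :=
    (ae_restrict_mem measurableSet_Ioi).mono fun t ht x hx =>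
      (hasDerivAt_rpow_div_Gamma_add_one ht (by linarith [hx.1])).const_mul _
  have hderiv := (hasDerivAt_integral_of_dominated_loc_of_deriv_le hnhds
    (Eventually.of_forall fun x => by fun_prop) hint (by unfold rpowDivGammaDeriv; fun_prop)
    ((ae_restrict_mem measurableSet_Ioi).mono fun t ht x hx => hbound x hx t ht) hB hdiff).2
  have hclosed : HasDerivAt (fun x => (1 / s) ^ (x + 1)) ((1 / s) ^ (c + 1) * log (1 / s)) c :=
    (hasStrictDerivAt_const_rpow (by positivity) (c + 1)).hasDerivAt.comp_add_const c 1
  have heq : (fun x => ∫ t in Ioi 0, exp (-(s * t)) * (t ^ x / Gamma (x + 1)))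
      =ᶠ[𝓝 c] fun x => (1 / s) ^ (x + 1) := by
    filter_upwards [Ioi_mem_nhds (by linarith : -1 < c)] with x hx
    exact integral_exp_neg_mul_mul_rpow_div_Gamma hs hx
  rw [hderiv.unique (hclosed.congr_of_eventuallyEq heq), one_div, inv_rpow hs.le, log_inv]
  ring

lemma integrable_exp_neg_mul_mul_rpowDivGammaDeriv_affine {F : ℝ → ℝ} (hF : Continuous F)
    (hsupp : HasCompactSupport F) {a b s : ℝ} (ha : 0 ≤ a) (hb : 0 < b) (hs : 0 < s) :
    Integrable
      (fun p : ℝ × ℝ => exp (-(s * p.1)) * (F p.2 * rpowDivGammaDeriv (a * p.2 + b) p.1))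
      ((volume.restrict (Ioi 0)).prod (volume.restrict (Ioi 0))) := by
  obtain ⟨R, hR, hFR⟩ := hsupp.exists_pos_le_norm
  obtain ⟨B, hB, hbound⟩ :=
    exists_integrableOn_bound_exp_neg_mul_mul_rpowDivGammaDeriv hs hb
      (by nlinarith : b ≤ a * R + b)
  have hFint : Integrable (fun u => ‖F u‖) (volume.restrict (Ioi 0)) :=
    (hF.integrable_of_hasCompactSupport hsupp).norm.restrict
  have hquad : MeasurableSet (Ioi (0 : ℝ) ×ˢ Ioi (0 : ℝ)) :=
    measurableSet_Ioi.prod measurableSet_Ioi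
  refine (hB.mul_prod hFint).mono' ?_ ?_ <;> rw [Measure.prod_restrict]
  · have hkernel : ContinuousOn (fun p : ℝ × ℝ => rpowDivGammaDeriv (a * p.2 + b) p.1)
        (Ioi 0 ×ˢ Ioi 0) :=
      continuousOn_rpowDivGammaDeriv.comp (f := fun p : ℝ × ℝ => (a * p.2 + b, p.1))
        (by fun_prop) fun p hp => ⟨by simp only [mem_Ioi]; nlinarith [hp.2.out], hp.1⟩
    exact ((by fun_prop : Continuous fun p : ℝ × ℝ => exp (-(s * p.1))).continuousOn.mul
      ((hF.comp continuous_snd).continuousOn.mul hkernel)).aestronglyMeasurable hquad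
  · filter_upwards [ae_restrict_mem hquad] with ⟨t, u⟩ ⟨ht, hu⟩
    rcases lt_or_ge u R with huR | huR
    · calc ‖exp (-(s * t)) * (F u * rpowDivGammaDeriv (a * u + b) t)‖
          = ‖F u‖ * ‖exp (-(s * t)) * rpowDivGammaDeriv (a * u + b) t‖ := by
            simp only [norm_mul]; ring
        _ ≤ ‖F u‖ * B t := by
            gcongr
            exact hbound _ ⟨by nlinarith [hu.out], by nlinarith⟩ t ht
        _ = B t * ‖F u‖ := mul_comm _ _
    · simp [hFR u (by rwa [norm_of_nonneg hu.out.le])]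

theorem stmt_17_general (F : ℝ → ℝ) (hF : Continuous F) (hsupp : HasCompactSupport F)
    (a b s : ℝ) (ha : 0 < a) (hb : 0 < b)
    (hs : 1 < s) :
    ∫ t in Set.Ioi (0:ℝ), Real.exp (-s * t) *
        (∫ u in Set.Ioi (0:ℝ), F u * t ^ (a * u + b) / Real.Gamma (a * u + b + 1) *
          (Real.log t - deriv Real.Gamma (a * u + b + 1) / Real.Gamma (a * u + b + 1)))
      = -(Real.log s * (∫ u in Set.Ioi (0:ℝ), Real.exp (-(a * Real.log s) * u) * F u)
          / s ^ (b + 1)) := by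
  have hs0 : 0 < s := by linarith
  have hinner : ∀ u ∈ Ioi (0 : ℝ),
      ∫ t in Ioi 0, exp (-(s * t)) * (F u * rpowDivGammaDeriv (a * u + b) t)
        = -log s / s ^ (b + 1) * (exp (-(a * log s) * u) * F u) := by
    intro u (hu : 0 < u)
    have hsplit : s ^ (a * u + b + 1) = s ^ (b + 1) / exp (-(a * log s) * u) := by
      rw [add_assoc, rpow_add hs0, rpow_def_of_pos hs0 (a * u), neg_mul, exp_neg, div_inv_eq_mul]
      ring_nf
    simp_rw [mul_left_comm _ (F u)]
    rw [integral_const_mul, integral_exp_neg_mul_mul_rpowDivGammaDeriv hs0 (by positivity), hsplit]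
    field_simp
  calc _ = ∫ t in Ioi 0, ∫ u in Ioi 0,
        exp (-(s * t)) * (F u * rpowDivGammaDeriv (a * u + b) t) := by
        refine setIntegral_congr_fun measurableSet_Ioi fun t _ => ?_
        rw [neg_mul, ← integral_const_mul]
        simp only [rpowDivGammaDeriv, mul_div_assoc, mul_assoc]
    _ = ∫ u in Ioi 0, ∫ t in Ioi 0,
        exp (-(s * t)) * (F u * rpowDivGammaDeriv (a * u + b) t) :=
      integral_integral_swap
        (integrable_exp_neg_mul_mul_rpowDivGammaDeriv_affine hF hsupp ha.le hb hs0)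
    _ = ∫ u in Ioi 0, -log s / s ^ (b + 1) * (exp (-(a * log s) * u) * F u) :=
      setIntegral_congr_fun measurableSet_Ioi hinner
    _ = _ := by rw [integral_const_mul]; ring

theorem stmt_17 (F : ℝ → ℝ) (hF : Continuous F) (hsupp : HasCompactSupport F)
    (hpos : Function.support F ⊆ Set.Ici 0) (a b s : ℝ) (ha : 0 < a) (hb : 0 < b)
    (hs : 1 < s) :
    ∫ t in Set.Ioi (0:ℝ), Real.exp (-s * t) *
        (∫ u in Set.Ioi (0:ℝ), F u * t ^ (a * u + b) / Real.Gamma (a * u + b + 1) *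
          (Real.log t - deriv Real.Gamma (a * u + b + 1) / Real.Gamma (a * u + b + 1)))
      = -(Real.log s * (∫ u in Set.Ioi (0:ℝ), Real.exp (-(a * Real.log s) * u) * F u)
          / s ^ (b + 1)) :=
  stmt_17_general F hF hsupp a b s ha hb hs
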